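/- Let λ(n) := √(π·√(24n+1)/(6√2)). For every integer N ≥ 3 and every integer n ≥ ((3(3N+4)·log(6N+8))/1.3²)⁴ one has |1/((24n+1)·λ(n)) − (1/(8·3^{3/4}·√π·n^{5/4})) · Σ_{m=0}^{⌊(N+1)/2⌋} binom(−5/4, m)·(24n)^{−m}| ≤ (1/(8·3^{3/4}·√π·n^{5/4})) · 5.3·10^{−2}·(5/96)^{N/2} · n^{−(N+2)/2}. -/

import Mathlib

open Real Finset

/-- Generalized binomial coefficient `binom(α, m) = α(α−1)⋯(α−m+1)/m!`. -/
noncomputable def genBinom (α : ℝ) (m : ℕ) : ℝ :=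
  (∏ i ∈ Finset.range m, (α - i)) / (Nat.factorial m : ℝ)

/-- `λ(n) = √(π√(24n+1)/(6√2))`. -/
noncomputable def lam (n : ℕ) : ℝ :=
  Real.sqrt (π * Real.sqrt (24 * (n:ℝ) + 1) / (6 * Real.sqrt 2))

lemma genBinom_zero (α : ℝ) : genBinom α 0 = 1 := by simp [genBinom]

lemma genBinom_succ (α : ℝ) (m : ℕ) :
    genBinom α (m + 1) = genBinom α m * (α - m) / (m + 1) := by
  unfold genBinom
  rw [Finset.prod_range_succ, Nat.factorial_succ]
  push_cast
  rw [div_mul_eq_mul_div, div_div, mul_comm ((m:ℝ)+1)]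

lemma genBinom_shift (α : ℝ) (j : ℕ) :
    ((j : ℝ) + 1) * genBinom α (j + 1) = α * genBinom (α - 1) j := by
  unfold genBinom
  rw [Finset.prod_range_succ']
  have h : ∀ i ∈ Finset.range j, (α - ((i : ℕ) + 1 : ℕ)) = (α - 1 - i) := by
    intro i _; push_cast; ring
  rw [Finset.prod_congr rfl h]
  have h2 : (j.factorial : ℝ) ≠ 0 := by positivity
  have h3 : ((j+1).factorial : ℝ) = ((j:ℝ)+1) * j.factorial := by
    rw [Nat.factorial_succ]; push_cast; ring
  rw [h3]
  field_simp
  ring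

noncomputable def binS (α x : ℝ) (k : ℕ) : ℝ := ∑ m ∈ Finset.range (k+1), genBinom α m * x^m

noncomputable def binR (α x : ℝ) (k : ℕ) : ℝ := (1+x)^α - binS α x k

lemma hasDerivAt_binR (α : ℝ) (k : ℕ) {x : ℝ} (hx : 0 < 1 + x) :
    HasDerivAt (fun y => binR α y (k+1)) (α * binR (α-1) x k) x := by
  have hb : HasDerivAt (fun y : ℝ => 1 + y) 1 x := (hasDerivAt_id x).const_add 1
  have h1 : HasDerivAt (fun y : ℝ => (1+y)^α) (α * (1+x)^(α-1)) x := by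
    have := (Real.hasDerivAt_rpow_const (x := 1+x) (p := α) (Or.inl (ne_of_gt hx))).comp x hb
    rw [mul_one] at this
    exact this
  have h2 : HasDerivAt (fun y => ∑ m ∈ Finset.range (k+2), genBinom α m * y^m)
      (∑ m ∈ Finset.range (k+2), genBinom α m * ((m:ℝ) * x^(m-1))) x := by
    apply HasDerivAt.fun_sum
    intro m _
    exact (hasDerivAt_pow m x).const_mul _
  have hsum : (∑ m ∈ Finset.range (k+2), genBinom α m * ((m:ℝ) * x^(m-1)))
      = α * ∑ j ∈ Finset.range (k+1), genBinom (α-1) j * x^j := by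
    rw [Finset.sum_range_succ']
    simp only [Nat.cast_zero, zero_mul, mul_zero, add_zero, Nat.add_sub_cancel, Nat.cast_add,
      Nat.cast_one]
    rw [Finset.mul_sum]
    apply Finset.sum_congr rfl
    intro j _
    have h := genBinom_shift α j
    linear_combination x^j * h
  have h3 := h1.sub h2
  have hfe : (fun y => binR α y (k+1)) =
      (fun y => (1+y)^α - ∑ m ∈ Finset.range (k+2), genBinom α m * y^m) := by
    funext y; rw [binR, binS]
  rw [hfe]
  have hval : α * (1+x)^(α-1) - (∑ m ∈ Finset.range (k+2), genBinom α m * ((m:ℝ) * x^(m-1)))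
      = α * binR (α-1) x k := by
    rw [hsum, binR, binS]; ring
  rw [← hval]
  exact h3

lemma sign_binR : ∀ k : ℕ, ∀ α : ℝ, α < 0 → ∀ x : ℝ, 0 ≤ x →
    0 ≤ (-1:ℝ)^(k+1) * binR α x k := by
  intro k
  induction k with
  | zero =>
    intro α hα x hx
    have h1 : (1+x)^α ≤ 1 := Real.rpow_le_one_of_one_le_of_nonpos (by linarith) hα.le
    have h2 : binS α x 0 = 1 := by simp [binS, genBinom_zero]
    have e : (-1:ℝ)^(0+1) = -1 := by norm_num
    rw [e, binR, h2]
    nlinarith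
  | succ k ih =>
    intro α hα x hx
    set g : ℝ → ℝ := fun y => (-1:ℝ)^(k+2) * binR α y (k+1) with hg
    have hg0 : g 0 = 0 := by
      have hS : binS α 0 (k+1) = 1 := by
        rw [binS, Finset.sum_eq_single 0]
        · simp [genBinom_zero]
        · intro b _ hb; simp [zero_pow hb]
        · intro h; simp at h
      simp [hg, binR, hS, Real.one_rpow]
    have hd : ∀ y : ℝ, 0 ≤ y → HasDerivAt g ((-1:ℝ)^(k+2) * (α * binR (α-1) y k)) y := by
      intro y hy
      exact (hasDerivAt_binR α k (by linarith)).const_mul _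
    have hmono : MonotoneOn g (Set.Ici 0) := by
      apply monotoneOn_of_deriv_nonneg (convex_Ici 0)
      · intro y hy
        exact (hd y hy).continuousAt.continuousWithinAt
      · intro y hy
        rw [interior_Ici] at hy
        exact ((hd y hy.le).differentiableAt).differentiableWithinAt
      · intro y hy
        rw [interior_Ici] at hy
        rw [(hd y hy.le).deriv]
        have hih := ih (α-1) (by linarith) y hy.le
        have he : (-1:ℝ)^(k+2) * (α * binR (α-1) y k)
            = (-α) * ((-1:ℝ)^(k+1) * binR (α-1) y k) := by
          rw [pow_succ]; ring
        rw [he]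
        exact mul_nonneg (by linarith) hih
    have := hmono Set.self_mem_Ici (Set.mem_Ici.2 hx) hx
    rw [hg0] at this
    simpa [hg] using this

lemma abs_binR_le (α : ℝ) (hα : α < 0) (x : ℝ) (hx : 0 ≤ x) (k : ℕ) :
    |binR α x k| ≤ |genBinom α (k+1)| * x^(k+1) := by
  have h1 := sign_binR k α hα x hx
  have h2 := sign_binR (k+1) α hα x hx
  have hRe : binR α x (k+1) = binR α x k - genBinom α (k+1) * x^(k+1) := by
    rw [binR, binR, binS, binS, Finset.sum_range_succ]; ring
  have hbx : genBinom α (k+1) * x^(k+1) ≤ |genBinom α (k+1)| * x^(k+1) :=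
    mul_le_mul_of_nonneg_right (le_abs_self _) (by positivity)
  have hbx' : -(|genBinom α (k+1)| * x^(k+1)) ≤ genBinom α (k+1) * x^(k+1) :=
    neg_le_of_neg_le (by
      have := mul_le_mul_of_nonneg_right (neg_abs_le (genBinom α (k+1))) (show (0:ℝ) ≤ x^(k+1) by positivity)
      nlinarith)
  rcases Nat.even_or_odd (k+1) with he | ho
  · have e1 : (-1:ℝ)^(k+1) = 1 := he.neg_one_pow
    have e2 : (-1:ℝ)^(k+1+1) = -1 := by rw [pow_succ, e1]; ring
    rw [e1, one_mul] at h1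
    rw [e2, hRe] at h2
    rw [abs_of_nonneg h1]
    nlinarith
  · have e1 : (-1:ℝ)^(k+1) = -1 := ho.neg_one_pow
    have e2 : (-1:ℝ)^(k+1+1) = 1 := by rw [pow_succ, e1]; ring
    rw [e1] at h1
    rw [e2, one_mul, hRe] at h2
    rw [abs_of_nonpos (by nlinarith)]
    nlinarith

lemma abs_genBinom_le : ∀ m : ℕ, |genBinom (-(5:ℝ)/4) m| ≤ (5/4)^m := by
  intro m
  induction m with
  | zero => simp [genBinom_zero]
  | succ m ih =>
    rw [genBinom_succ, abs_div, abs_mul]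
    have hm : (0:ℝ) ≤ m := Nat.cast_nonneg m
    have h1 : |(-(5:ℝ)/4 - m)| = 5/4 + m := by
      rw [abs_of_nonpos (by linarith)]
      ring
    have h2 : |(m:ℝ) + 1| = (m:ℝ) + 1 := abs_of_pos (by linarith)
    rw [h1, h2, div_le_iff₀ (by linarith), pow_succ]
    have hp : (0:ℝ) ≤ (5/4:ℝ)^m := by positivity
    nlinarith [mul_le_mul_of_nonneg_right ih (show (0:ℝ) ≤ 5/4 + m by linarith),
      mul_nonneg hp hm]

lemma const_identity : Real.sqrt (6 * Real.sqrt 2) * (8 * (3:ℝ)^((3:ℝ)/4)) = (24:ℝ)^((5:ℝ)/4) := by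
  have h2 : (0:ℝ) ≤ Real.sqrt 2 := Real.sqrt_nonneg 2
  have ha : (0:ℝ) ≤ Real.sqrt (6 * Real.sqrt 2) * (8 * (3:ℝ)^((3:ℝ)/4)) := by positivity
  have hb : (0:ℝ) ≤ (24:ℝ)^((5:ℝ)/4) := by positivity
  rw [← pow_left_inj₀ ha hb (show 4 ≠ 0 by norm_num)]
  have e1 : (Real.sqrt (6 * Real.sqrt 2))^4 = 72 := by
    have : (Real.sqrt (6 * Real.sqrt 2))^4 = ((Real.sqrt (6 * Real.sqrt 2))^2)^2 := by ring
    rw [this, Real.sq_sqrt (by positivity)]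
    have : (6 * Real.sqrt 2)^2 = 36 * (Real.sqrt 2 ^ 2) := by ring
    rw [this, Real.sq_sqrt (by norm_num)]
    norm_num
  have e2 : ((3:ℝ)^((3:ℝ)/4))^4 = 27 := by
    rw [← Real.rpow_natCast ((3:ℝ)^((3:ℝ)/4)) 4, ← Real.rpow_mul (by norm_num)]
    norm_num
  have e3 : ((24:ℝ)^((5:ℝ)/4))^4 = 24^5 := by
    rw [← Real.rpow_natCast ((24:ℝ)^((5:ℝ)/4)) 4, ← Real.rpow_mul (by norm_num)]
    norm_num
  rw [e3, mul_pow, e1, mul_pow, e2]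
  norm_num

lemma lam_inv (n : ℕ) (hn : 1 ≤ (n:ℝ)) :
    1 / ((24 * (n:ℝ) + 1) * lam n)
      = 1 / (8 * (3:ℝ)^((3:ℝ)/4) * Real.sqrt π * (n:ℝ)^((5:ℝ)/4)) *
        (1 + 1/(24*(n:ℝ)))^(-(5:ℝ)/4) := by
  have hn0 : (0:ℝ) < n := by linarith
  set t : ℝ := 24 * (n:ℝ) + 1 with hts
  have ht : (0:ℝ) < t := by simp only [hts]; linarith
  have h2 : (0:ℝ) < Real.sqrt 2 := Real.sqrt_pos.2 (by norm_num)
  have hπ : (0:ℝ) < Real.sqrt π := Real.sqrt_pos.2 pi_pos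
  have hq : Real.sqrt (Real.sqrt t) = t^((1:ℝ)/4) := by
    rw [Real.sqrt_eq_rpow, Real.sqrt_eq_rpow, ← Real.rpow_mul ht.le]
    norm_num
  have hl : lam n = Real.sqrt π * t^((1:ℝ)/4) / Real.sqrt (6 * Real.sqrt 2) := by
    rw [lam, Real.sqrt_div (by positivity), Real.sqrt_mul pi_pos.le, hq]
  have hx1 : (0:ℝ) < 1 + 1/(24*(n:ℝ)) := by positivity
  have ht54 : t * t^((1:ℝ)/4) = t^((5:ℝ)/4) := by
    nth_rewrite 1 [← Real.rpow_one t]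
    rw [← Real.rpow_add ht]
    norm_num
  have htx : t = (24*(n:ℝ)) * (1 + 1/(24*(n:ℝ))) := by
    field_simp
    exact hts
  have hsplit : t^((5:ℝ)/4)
      = (24:ℝ)^((5:ℝ)/4) * (n:ℝ)^((5:ℝ)/4) * (1 + 1/(24*(n:ℝ)))^((5:ℝ)/4) := by
    rw [htx, Real.mul_rpow (by positivity) hx1.le, Real.mul_rpow (by norm_num) hn0.le]
  have hC : Real.sqrt (6 * Real.sqrt 2) = (24:ℝ)^((5:ℝ)/4) / (8 * (3:ℝ)^((3:ℝ)/4)) := by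
    rw [← const_identity]
    field_simp
  have hneg : (1 + 1/(24*(n:ℝ)))^(-(5:ℝ)/4) = ((1 + 1/(24*(n:ℝ)))^((5:ℝ)/4))⁻¹ := by
    rw [show (-(5:ℝ)/4) = -((5:ℝ)/4) by ring, Real.rpow_neg hx1.le]
  rw [hl, hneg]
  have key : t * (Real.sqrt π * t^((1:ℝ)/4) / Real.sqrt (6 * Real.sqrt 2))
      = Real.sqrt π * t^((5:ℝ)/4) / Real.sqrt (6 * Real.sqrt 2) := by
    rw [← ht54]; ring
  rw [key, hC, hsplit]
  have p1 : (0:ℝ) < (24:ℝ)^((5:ℝ)/4) := by positivity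
  have p2 : (0:ℝ) < (3:ℝ)^((3:ℝ)/4) := by positivity
  have p3 : (0:ℝ) < (n:ℝ)^((5:ℝ)/4) := by positivity
  have p4 : (0:ℝ) < (1 + 1/(24*(n:ℝ)))^((5:ℝ)/4) := by positivity
  field_simp

theorem stmt13 :
    ∀ N : ℕ, 3 ≤ N →
      ∀ n : ℕ, ((3 * (3 * (N:ℝ) + 4) * Real.log (6 * (N:ℝ) + 8)) / 1.3 ^ 2) ^ 4 ≤ (n:ℝ) →
        |1 / ((24 * (n:ℝ) + 1) * lam n) -
            1 / (8 * (3:ℝ) ^ ((3:ℝ)/4) * Real.sqrt π * (n:ℝ) ^ ((5:ℝ)/4)) *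
              ∑ m ∈ Finset.range ((N + 1) / 2 + 1),
                genBinom (-(5:ℝ)/4) m * ((24 * (n:ℝ)) ^ m)⁻¹| ≤
          1 / (8 * (3:ℝ) ^ ((3:ℝ)/4) * Real.sqrt π * (n:ℝ) ^ ((5:ℝ)/4)) *
            (5.3 * (10:ℝ) ^ (-(2:ℤ)) * ((5:ℝ)/96) ^ ((N:ℝ)/2)) *
            (n:ℝ) ^ (-(((N:ℝ) + 2) / 2)) := by
  intro N hN n hn
  have hNr : (3:ℝ) ≤ (N:ℝ) := by exact_mod_cast hN
  -- n ≥ 1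
  have hlog : 1 ≤ Real.log (6 * (N:ℝ) + 8) := by
    rw [Real.le_log_iff_exp_le (by positivity)]
    have := Real.exp_one_lt_d9
    linarith
  have hq : (1:ℝ) ≤ (3 * (3 * (N:ℝ) + 4) * Real.log (6 * (N:ℝ) + 8)) / 1.3 ^ 2 := by
    rw [le_div_iff₀ (by norm_num)]
    nlinarith
  have hn1 : (1:ℝ) ≤ (n:ℝ) := by
    have h4 := pow_le_pow_left₀ (by norm_num : (0:ℝ) ≤ 1) hq 4
    simpa using h4.trans hn
  have hn0 : (0:ℝ) < (n:ℝ) := by linarith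
  set x : ℝ := 1 / (24 * (n:ℝ)) with hxdef
  have hx0 : 0 ≤ x := by positivity
  set K : ℕ := (N + 1) / 2 with hK
  set c : ℝ := 1 / (8 * (3:ℝ) ^ ((3:ℝ)/4) * Real.sqrt π * (n:ℝ) ^ ((5:ℝ)/4)) with hc
  have hπ : (0:ℝ) < Real.sqrt π := Real.sqrt_pos.2 pi_pos
  have hcpos : 0 < c := by
    rw [hc]
    positivity
  have hα : (-(5:ℝ)/4) < 0 := by norm_num
  -- sum rewrite
  have hsum : (∑ m ∈ Finset.range (K + 1), genBinom (-(5:ℝ)/4) m * ((24 * (n:ℝ)) ^ m)⁻¹)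
      = binS (-(5:ℝ)/4) x K := by
    rw [binS]
    apply Finset.sum_congr rfl
    intro m _
    rw [hxdef, one_div, inv_pow]
  have hmain : 1 / ((24 * (n:ℝ) + 1) * lam n)
        - c * ∑ m ∈ Finset.range (K + 1), genBinom (-(5:ℝ)/4) m * ((24 * (n:ℝ)) ^ m)⁻¹
      = c * binR (-(5:ℝ)/4) x K := by
    rw [lam_inv n hn1, hsum, binR, mul_sub]
  rw [hmain, abs_mul, abs_of_pos hcpos]
  -- bound binR
  have hb1 : |binR (-(5:ℝ)/4) x K| ≤ (5/4)^(K+1) * x^(K+1) := by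
    refine (abs_binR_le _ hα x hx0 K).trans ?_
    exact mul_le_mul_of_nonneg_right (abs_genBinom_le (K+1)) (by positivity)
  have hb2 : (5/4:ℝ)^(K+1) * x^(K+1) = (5/96:ℝ)^(K+1) * ((n:ℝ)⁻¹)^(K+1) := by
    rw [← mul_pow, ← mul_pow, hxdef]
    congr 1
    field_simp
    ring
  -- exponent comparison
  have hKN : (N:ℝ)/2 + 1 ≤ ((K:ℝ) + 1) := by
    have h2K : N ≤ 2 * K := by omega
    have : (N:ℝ) ≤ 2 * (K:ℝ) := by exact_mod_cast h2K
    linarith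
  have hi : (5/96:ℝ)^(K+1) ≤ 5.3 * (10:ℝ)^(-(2:ℤ)) * ((5:ℝ)/96)^((N:ℝ)/2) := by
    have e : (5/96:ℝ)^(K+1) = (5/96:ℝ)^(((K+1:ℕ)):ℝ) := by
      rw [Real.rpow_natCast]
    rw [e]
    have h1 : (5/96:ℝ)^(((K+1:ℕ)):ℝ) ≤ (5/96:ℝ)^((N:ℝ)/2 + 1) := by
      apply Real.rpow_le_rpow_of_exponent_ge (by norm_num) (by norm_num)
      push_cast
      linarith
    refine h1.trans ?_
    rw [Real.rpow_add (by norm_num), Real.rpow_one]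
    rw [mul_comm (5.3 * (10:ℝ)^(-(2:ℤ)))]
    apply mul_le_mul_of_nonneg_left _ (by positivity)
    norm_num
  have hii : ((n:ℝ)⁻¹)^(K+1) ≤ (n:ℝ) ^ (-(((N:ℝ) + 2) / 2)) := by
    have e : ((n:ℝ)⁻¹)^(K+1) = (n:ℝ)^(-(((K+1:ℕ)):ℝ)) := by
      rw [Real.rpow_neg hn0.le, Real.rpow_natCast, inv_pow]
    rw [e]
    apply Real.rpow_le_rpow_of_exponent_le hn1
    push_cast
    linarith
  have hfinal : (5/96:ℝ)^(K+1) * ((n:ℝ)⁻¹)^(K+1)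
      ≤ (5.3 * (10:ℝ)^(-(2:ℤ)) * ((5:ℝ)/96)^((N:ℝ)/2)) * (n:ℝ) ^ (-(((N:ℝ) + 2) / 2)) :=
    mul_le_mul hi hii (by positivity) (by positivity)
  calc c * |binR (-(5:ℝ)/4) x K|
      ≤ c * ((5/96:ℝ)^(K+1) * ((n:ℝ)⁻¹)^(K+1)) := by
        rw [← hb2]
        exact mul_le_mul_of_nonneg_left hb1 hcpos.le
    _ ≤ c * ((5.3 * (10:ℝ)^(-(2:ℤ)) * ((5:ℝ)/96)^((N:ℝ)/2)) * (n:ℝ) ^ (-(((N:ℝ) + 2) / 2))) :=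
        mul_le_mul_of_nonneg_left hfinal hcpos.le
    _ = c * (5.3 * (10:ℝ)^(-(2:ℤ)) * ((5:ℝ)/96)^((N:ℝ)/2)) * (n:ℝ) ^ (-(((N:ℝ) + 2) / 2)) := by
        ring
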